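/- Let R > 0 and z₀ < −R be fixed. There exists a constant C > 0, depending only on R and z₀, such that for every λ > 0 and every w ∈ C²([−R, R]; ℝ), ∫_{−R}^{R} e^{2λ(z−z₀)^{−2}} |w''(z)|² dz ≥ −C [ e^{2λ(R−z₀)^{−2}} |w'(R)|² + e^{2λ(−R−z₀)^{−2}} |w'(−R)|² ] + 2λ ∫_{−R}^{R} (z − z₀)^{−3} e^{2λ(z−z₀)^{−2}} |w'(z)|² dz − ∫_{−R}^{R} e^{2λ(z−z₀)^{−2}} |w'(z)|² dz. -/

import Mathlib

/-!
With `φ z = exp (2λ/(z - z₀)²)` one has `φ' = -4λ (z - z₀)⁻³ φ`, so integrating by parts over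
`[-R, R]` gives `∫ 2φ w' w'' = φ(R) w'(R)² - φ(-R) w'(-R)² + 4λ ∫ (z - z₀)⁻³ φ w'²`. Bounding the left side by
`∫ φ w''² + ∫ φ w'²` (from `2ab ≤ a² + b²`) yields the claim with `C = 1`: the boundary term at `R`
is nonnegative, and `4λ ∫ (z - z₀)⁻³ φ w'² ≥ 2λ ∫ (z - z₀)⁻³ φ w'²` because `z - z₀ > 0` on `[-R, R]`.
-/

open Set Real MeasureTheory intervalIntegral
open scoped Interval

theorem integral_mul_two_mul_deriv_eq {a b : ℝ} {φ φ' u u' : ℝ → ℝ}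
    (hφ : ∀ x ∈ [[a, b]], HasDerivWithinAt φ (φ' x) [[a, b]] x)
    (hu : ∀ x ∈ [[a, b]], HasDerivWithinAt u (u' x) [[a, b]] x)
    (hφ' : ContinuousOn φ' [[a, b]]) (hu' : ContinuousOn u' [[a, b]]) :
    ∫ x in a..b, φ x * (2 * u x * u' x) =
      φ b * u b ^ 2 - φ a * u a ^ 2 - ∫ x in a..b, φ' x * u x ^ 2 := by
  have hu_cont : ContinuousOn u [[a, b]] := fun x hx ↦ (hu x hx).continuousWithinAt
  refine integral_mul_deriv_eq_deriv_mul_of_hasDerivWithinAt (v := fun x ↦ u x ^ 2) hφ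
    (fun x hx ↦ ?_) hφ'.intervalIntegrable (ContinuousOn.intervalIntegrable (by fun_prop))
  simpa [mul_comm] using (hu x hx).fun_pow 2

theorem integral_mul_two_mul_le {a b : ℝ} (hab : a ≤ b) {φ f g : ℝ → ℝ}
    (hφ : ∀ x ∈ Icc a b, 0 ≤ φ x) (hφc : ContinuousOn φ (Icc a b))
    (hf : ContinuousOn f (Icc a b)) (hg : ContinuousOn g (Icc a b)) :
    ∫ x in a..b, φ x * (2 * f x * g x) ≤
      (∫ x in a..b, φ x * f x ^ 2) + ∫ x in a..b, φ x * g x ^ 2 := by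
  have hint : ∀ h : ℝ → ℝ, ContinuousOn h (Icc a b) → IntervalIntegrable h volume a b :=
    fun h hh ↦ (uIcc_of_le hab ▸ hh).intervalIntegrable
  rw [← integral_add (hint _ (by fun_prop)) (hint _ (by fun_prop))]
  refine integral_mono_on hab (hint _ (by fun_prop)) (hint _ (by fun_prop)) fun x hx ↦ ?_
  nlinarith [mul_nonneg (hφ x hx) (sq_nonneg (f x - g x))]

theorem le_integral_mul_deriv_sq {a b : ℝ} (hab : a ≤ b) {φ φ' u u' : ℝ → ℝ}
    (hφ : ∀ x ∈ Icc a b, HasDerivWithinAt φ (φ' x) (Icc a b) x)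
    (hu : ∀ x ∈ Icc a b, HasDerivWithinAt u (u' x) (Icc a b) x)
    (hφ' : ContinuousOn φ' (Icc a b)) (hu' : ContinuousOn u' (Icc a b))
    (hφ_nonneg : ∀ x ∈ Icc a b, 0 ≤ φ x) :
    φ b * u b ^ 2 - φ a * u a ^ 2 - (∫ x in a..b, φ' x * u x ^ 2)
      - (∫ x in a..b, φ x * u x ^ 2) ≤ ∫ x in a..b, φ x * u' x ^ 2 := by
  rw [← uIcc_of_le hab] at hφ hu hφ' hu'
  rw [← integral_mul_two_mul_deriv_eq hφ hu hφ' hu']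
  rw [uIcc_of_le hab] at hφ hu hu'
  have := integral_mul_two_mul_le hab (f := u) (g := u') hφ_nonneg
    (fun x hx ↦ (hφ x hx).continuousWithinAt) (fun x hx ↦ (hu x hx).continuousWithinAt) hu'
  linarith

noncomputable def carlemanWeight (lam z₀ z : ℝ) : ℝ := exp (2 * lam / (z - z₀) ^ 2)

theorem hasDerivAt_carlemanWeight (lam : ℝ) {z₀ z : ℝ} (hz : z ≠ z₀) :
    HasDerivAt (carlemanWeight lam z₀)
      (-(4 * lam * (z - z₀)⁻¹ ^ 3) * carlemanWeight lam z₀ z) z := by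
  have hz' : z - z₀ ≠ 0 := sub_ne_zero.mpr hz
  have h := (hasDerivAt_const z (2 * lam)).fun_div
    (((hasDerivAt_id z).sub_const z₀).fun_pow 2) (pow_ne_zero 2 hz')
  refine h.exp.congr_deriv ?_
  simp only [carlemanWeight, id]
  field_simp
  ring

/-- Inequality (3.12): there is `C > 0` depending only on `R` and `z₀` such that for every
`λ > 0` and every `w ∈ C²([-R, R]; ℝ)`,
`∫ e^{2λ(z-z₀)⁻²}|w''|² ≥ -C[e^{2λ(R-z₀)⁻²}|w'(R)|² + e^{2λ(-R-z₀)⁻²}|w'(-R)|²]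
  + 2λ ∫ (z-z₀)⁻³ e^{2λ(z-z₀)⁻²}|w'|² - ∫ e^{2λ(z-z₀)⁻²}|w'|²`. -/
theorem carleman_first_derivative_step (R z₀ : ℝ) (hR : 0 < R) (hz₀ : z₀ < -R) :
    ∃ C : ℝ, 0 < C ∧
      ∀ lam : ℝ, 0 < lam →
      ∀ w w' w'' : ℝ → ℝ,
        (∀ z ∈ Set.Icc (-R) R, HasDerivWithinAt w (w' z) (Set.Icc (-R) R) z) →
        (∀ z ∈ Set.Icc (-R) R, HasDerivWithinAt w' (w'' z) (Set.Icc (-R) R) z) →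
        ContinuousOn w'' (Set.Icc (-R) R) →
        (∫ z in (-R)..R, Real.exp (2 * lam / (z - z₀) ^ 2) * (w'' z) ^ 2) ≥
          -C * (Real.exp (2 * lam / (R - z₀) ^ 2) * (w' R) ^ 2
              + Real.exp (2 * lam / (-R - z₀) ^ 2) * (w' (-R)) ^ 2)
          + 2 * lam * (∫ z in (-R)..R,
              (z - z₀)⁻¹ ^ 3 * Real.exp (2 * lam / (z - z₀) ^ 2) * (w' z) ^ 2)
          - ∫ z in (-R)..R, Real.exp (2 * lam / (z - z₀) ^ 2) * (w' z) ^ 2 := by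
  refine ⟨1, one_pos, fun lam hlam w w' w'' _ hw' hw'' ↦ ?_⟩
  have hpos : ∀ z ∈ Icc (-R) R, 0 < z - z₀ := fun z hz ↦ by linarith [hz.1]
  have hφ : ∀ z ∈ Icc (-R) R, HasDerivWithinAt (carlemanWeight lam z₀)
      (-(4 * lam * (z - z₀)⁻¹ ^ 3) * carlemanWeight lam z₀ z) (Icc (-R) R) z :=
    fun z hz ↦ (hasDerivAt_carlemanWeight lam (sub_pos.1 (hpos z hz)).ne').hasDerivWithinAt
  have hφ_cont : ContinuousOn (carlemanWeight lam z₀) (Icc (-R) R) :=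
    fun z hz ↦ (hφ z hz).continuousWithinAt
  have hinv_cont : ContinuousOn (fun z ↦ (z - z₀)⁻¹) (Icc (-R) R) :=
    (continuousOn_id.sub continuousOn_const).inv₀ fun z hz ↦ (hpos z hz).ne'
  have hφ'_cont : ContinuousOn (fun z ↦ -(4 * lam * (z - z₀)⁻¹ ^ 3) * carlemanWeight lam z₀ z)
      (Icc (-R) R) := by
    fun_prop
  have h_ibp := le_integral_mul_deriv_sq (by linarith) hφ hw' hφ'_cont hw''
    (fun z _ ↦ (exp_pos _).le)
  have hJ_nonneg : 0 ≤ ∫ z in (-R)..R,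
      (z - z₀)⁻¹ ^ 3 * Real.exp (2 * lam / (z - z₀) ^ 2) * (w' z) ^ 2 :=
    integral_nonneg (by linarith) fun z hz ↦ by have := hpos z hz; positivity
  simp only [carlemanWeight, neg_mul, mul_assoc, intervalIntegral.integral_neg,
    intervalIntegral.integral_const_mul] at h_ibp
  simp only [mul_assoc] at hJ_nonneg ⊢
  linarith [mul_nonneg hlam.le hJ_nonneg,
    mul_nonneg (exp_pos (2 * lam / (R - z₀) ^ 2)).le (sq_nonneg (w' R))]
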